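/- arXiv:2108.12595 — 3 statements merged into one kernel-verified Lean document; each statement's English description precedes it below -/
import Mathlib

section
/- Let K be a field and let U₁, U₂, V₁, V₂ be K-vector spaces with subspaces W'₁ ⊆ U₁, W'₂ ⊆ U₂, W''₁ ⊆ V₁, W''₂ ⊆ V₂. Let x' : U₁ → U₂ be linear with x'(W'₁) ⊆ W'₂, let x'' : V₁ → V₂ be linear with x''(W''₁) ⊆ W''₂, and let y : U₁ → V₂ be linear. Let x : U₁ × V₁ → U₂ × V₂ be the linear map x(u,v) = (x'(u), y(u) + x''(v)), let x̄'' : V₁⧸W''₁ → V₂⧸W''₂ be the map induced by x'', and let π : V₂ → V₂⧸W''₂ be the quotient map. Then for linear maps z₁ : W'₁ → V₁⧸W''₁ and z₂ : W'₂ → V₂⧸W''₂, the inclusion x(W_{z₁}) ⊆ W_{z₂} holds if and only if z₂(x'(u)) = x̄''(z₁(u)) + π(y(u)) for every u ∈ W'₁. -/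
/-- For subspaces `W' ⊆ U`, `W'' ⊆ V` and a linear map `z : W' → V⧸W''`, the graph
subspace `W_z = {(u,v) ∈ U × V : u ∈ W' and z(u) = v + W''}`. -/
def graphSubmodule (K : Type*) {U V : Type*} [Field K] [AddCommGroup U] [Module K U]
    [AddCommGroup V] [Module K V] (W' : Submodule K U) (W'' : Submodule K V)
    (z : W' →ₗ[K] V ⧸ W'') : Submodule K (U × V) where
  carrier := {p : U × V | ∃ hu : p.1 ∈ W', z ⟨p.1, hu⟩ = Submodule.Quotient.mk p.2}
  zero_mem' := by
    refine ⟨W'.zero_mem, ?_⟩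
    show z ⟨(0 : U), W'.zero_mem⟩ = Submodule.Quotient.mk (0 : V)
    have h0 : (⟨(0 : U), W'.zero_mem⟩ : W') = 0 := rfl
    rw [h0, map_zero]
    simp
  add_mem' := by
    rintro ⟨a₁, b₁⟩ ⟨a₂, b₂⟩ ⟨h₁, hz₁⟩ ⟨h₂, hz₂⟩
    refine ⟨W'.add_mem h₁ h₂, ?_⟩
    show z ⟨a₁ + a₂, W'.add_mem h₁ h₂⟩ = Submodule.Quotient.mk (b₁ + b₂)
    have h0 : (⟨a₁ + a₂, W'.add_mem h₁ h₂⟩ : W') = ⟨a₁, h₁⟩ + ⟨a₂, h₂⟩ := rfl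
    rw [h0, map_add, hz₁, hz₂]
    simp [Submodule.Quotient.mk_add]
  smul_mem' := by
    rintro c ⟨a, b⟩ ⟨h, hz⟩
    refine ⟨W'.smul_mem c h, ?_⟩
    show z ⟨c • a, W'.smul_mem c h⟩ = Submodule.Quotient.mk (c • b)
    have h0 : (⟨c • a, W'.smul_mem c h⟩ : W') = c • (⟨a, h⟩ : W') := rfl
    rw [h0, map_smul, hz]
    simp [Submodule.Quotient.mk_smul]

/-! The graph `W_{z₁}` consists of the pairs `(u, v)` with `u ∈ W'₁` and `v` a lift of `z₁ u`, so
`x(W_{z₁}) ⊆ W_{z₂}` says that `z₂ (x' u)` is the class of `y u + x'' v` for every such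
lift `v`. That class is `x̄'' (z₁ u) + π (y u)` whatever lift is chosen, and every `z₁ u`
has a lift. -/

section

variable {R M N : Type*} [Ring R] [AddCommGroup M] [Module R M] [AddCommGroup N] [Module R N]

theorem Submodule.forall_mk_eq_imp_iff {p : Submodule R M} {q : M ⧸ p} {P : M ⧸ p → Prop} :
    (∀ v : M, Submodule.Quotient.mk v = q → P (Submodule.Quotient.mk v)) ↔ P q := by
  obtain ⟨v, rfl⟩ := Submodule.Quotient.mk_surjective p q
  exact ⟨fun h ↦ h v rfl, fun h w hw ↦ hw ▸ h⟩

theorem Submodule.mk_add_map_eq_mapQ_add_mkQ (p : Submodule R M) (p' : Submodule R N)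
    (f : M →ₗ[R] N) (hf : p ≤ p'.comap f) (w : N) (v : M) :
    (Submodule.Quotient.mk (w + f v) : N ⧸ p') =
      p.mapQ p' f hf (Submodule.Quotient.mk v) + p'.mkQ w := by
  rw [add_comm, Submodule.Quotient.mk_add, Submodule.mapQ_apply, Submodule.mkQ_apply]

end

section

variable {K U V U' V' M : Type*} [Field K] [AddCommGroup U] [Module K U]
  [AddCommGroup V] [Module K V] [AddCommGroup U'] [Module K U'] [AddCommGroup V'] [Module K V']
  [AddCommGroup M] [Module K M]
  {W' : Submodule K U} {W'' : Submodule K V} {z : W' →ₗ[K] V ⧸ W''}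

theorem mem_graphSubmodule {p : U × V} :
    p ∈ graphSubmodule K W' W'' z ↔
      ∃ hu : p.1 ∈ W', z ⟨p.1, hu⟩ = Submodule.Quotient.mk p.2 :=
  Iff.rfl

theorem map_graphSubmodule_le_iff (f : U × V →ₗ[K] M) (N : Submodule K M) :
    (graphSubmodule K W' W'' z).map f ≤ N ↔
      ∀ (u : U) (hu : u ∈ W') (v : V),
        Submodule.Quotient.mk v = z ⟨u, hu⟩ → f (u, v) ∈ N := by
  refine ⟨fun h u hu v hv ↦ h ⟨(u, v), ⟨hu, hv.symm⟩, rfl⟩, ?_⟩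
  rintro h _ ⟨⟨u, v⟩, ⟨hu, hv⟩, rfl⟩
  exact h u hu v hv.symm

def lowerTriangularMap (x' : U →ₗ[K] U') (x'' : V →ₗ[K] V') (y : U →ₗ[K] V') :
    U × V →ₗ[K] U' × V' :=
  (x'.comp (LinearMap.fst K U V)).prod
    (y.comp (LinearMap.fst K U V) + x''.comp (LinearMap.snd K U V))

theorem lowerTriangularMap_apply (x' : U →ₗ[K] U') (x'' : V →ₗ[K] V') (y : U →ₗ[K] V')
    (u : U) (v : V) : lowerTriangularMap x' x'' y (u, v) = (x' u, y u + x'' v) :=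
  rfl

end

/-- The third step of the proof of Lemma 3.2: for `x(u,v) = (x'(u), y(u) + x''(v))`,
the stability `x(W_{z₁}) ⊆ W_{z₂}` holds iff `z₂ ∘ x' = x̄'' ∘ z₁ + π ∘ y` on `W'₁`. -/
theorem graphSubmodule_stability_iff {K U₁ U₂ V₁ V₂ : Type*} [Field K]
    [AddCommGroup U₁] [Module K U₁] [AddCommGroup U₂] [Module K U₂]
    [AddCommGroup V₁] [Module K V₁] [AddCommGroup V₂] [Module K V₂]
    (W'₁ : Submodule K U₁) (W'₂ : Submodule K U₂)
    (W''₁ : Submodule K V₁) (W''₂ : Submodule K V₂)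
    (x' : U₁ →ₗ[K] U₂) (hx' : ∀ u ∈ W'₁, x' u ∈ W'₂)
    (x'' : V₁ →ₗ[K] V₂) (hx'' : W''₁ ≤ W''₂.comap x'')
    (y : U₁ →ₗ[K] V₂)
    (z₁ : W'₁ →ₗ[K] V₁ ⧸ W''₁) (z₂ : W'₂ →ₗ[K] V₂ ⧸ W''₂) :
    Submodule.map
        (LinearMap.prod ((x'.comp (LinearMap.fst K U₁ V₁)))
          ((y.comp (LinearMap.fst K U₁ V₁)) + (x''.comp (LinearMap.snd K U₁ V₁))))
        (graphSubmodule K W'₁ W''₁ z₁) ≤ graphSubmodule K W'₂ W''₂ z₂ ↔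
      ∀ (u : U₁) (hu : u ∈ W'₁),
        z₂ ⟨x' u, hx' u hu⟩ =
          Submodule.mapQ W''₁ W''₂ x'' hx'' (z₁ ⟨u, hu⟩) + Submodule.mkQ W''₂ (y u) := by
  change (graphSubmodule K W'₁ W''₁ z₁).map (lowerTriangularMap x' x'' y) ≤ _ ↔ _
  simp only [map_graphSubmodule_le_iff, lowerTriangularMap_apply, mem_graphSubmodule]
  refine forall₂_congr fun u hu ↦ ?_
  simp only [exists_prop_of_true (hx' u hu),
    Submodule.mk_add_map_eq_mapQ_add_mkQ W''₁ W''₂ x'' hx'']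
  exact Submodule.forall_mk_eq_imp_iff
    (P := fun q ↦ z₂ ⟨x' u, hx' u hu⟩ = W''₁.mapQ W''₂ x'' hx'' q + W''₂.mkQ (y u))
end

section
/- Let Q=(I,H,s,t) be a quiver, K a field, and for each i ∈ I let U(i), V(i) be K-vector spaces with subspaces W'(i) ⊆ U(i) and W''(i) ⊆ V(i). For each h ∈ H let x'_h : U(s h) → U(t h) be linear with x'_h(W'(s h)) ⊆ W'(t h), and let x''_h : V(s h) → V(t h) be linear with x''_h(W''(s h)) ⊆ W''(t h); write x̄''_h : V(s h)⧸W''(s h) → V(t h)⧸W''(t h) for the induced map and π_i : V(i) → V(i)⧸W''(i) for the quotient maps. Let Γ be the subspace of (Π_{i∈I} Hom_K(W'(i), V(i)⧸W''(i))) × (Π_{h∈H} Hom_K(U(s h), V(t h))) consisting of pairs (z, y) such that for every h ∈ H and every u ∈ W'(s h): z(t h)(x'_h(u)) = x̄''_h(z(s h)(u)) + π_{t h}(y_h(u)). Then the linear projection Γ → Π_{i∈I} Hom_K(W'(i), V(i)⧸W''(i)), (z,y) ↦ z, is surjective, and its kernel is exactly the set of pairs (0, y) with y_h(W'(s h)) ⊆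 W''(t h) for every h ∈ H. -/
/-!
Given `z`, the defect `z(t h) ∘ x'_h - x̄''_h ∘ z(s h)` is a linear map `W'(s h) → V(t h)⧸W''(t h)`.
Over a field it extends from `W'(s h)` to `U(s h)` and lifts through the quotient map, which
gives `y_h` with `π ∘ y_h` equal to the defect on `W'(s h)`, i.e. `(z, y) ∈ Γ`. For `z = 0` the
defining equation reduces to `π(y_h(u)) = 0`, which is the kernel description.
-/

/-- The space `Γ` from the proof of Lemma 3.2: pairs `(z, y)` with
`z ∈ Π_{i∈I} Hom_K(W'(i), V(i)⧸W''(i))` and `y ∈ Π_{h∈H} Hom_K(U(s h), V(t h))`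
such that for every arrow `h` and every `u ∈ W'(s h)`:
`z(t h)(x'_h(u)) = x̄''_h(z(s h)(u)) + π_{t h}(y_h(u))`. -/
def quiverGamma (K : Type*) [Field K] {I H : Type*} (s t : H → I)
    (U V : I → Type*) [∀ i, AddCommGroup (U i)] [∀ i, Module K (U i)]
    [∀ i, AddCommGroup (V i)] [∀ i, Module K (V i)]
    (W' : ∀ i, Submodule K (U i)) (W'' : ∀ i, Submodule K (V i))
    (x' : ∀ h, U (s h) →ₗ[K] U (t h)) (hx' : ∀ h, ∀ u ∈ W' (s h), x' h u ∈ W' (t h))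
    (x'' : ∀ h, V (s h) →ₗ[K] V (t h)) (hx'' : ∀ h, W'' (s h) ≤ (W'' (t h)).comap (x'' h)) :
    Submodule K ((∀ i, W' i →ₗ[K] V i ⧸ W'' i) × (∀ h, U (s h) →ₗ[K] V (t h))) where
  carrier := {p | ∀ (h : H) (u : W' (s h)),
    p.1 (t h) ⟨x' h u.1, hx' h u.1 u.2⟩ =
      Submodule.mapQ (W'' (s h)) (W'' (t h)) (x'' h) (hx'' h) (p.1 (s h) u) +
        Submodule.mkQ (W'' (t h)) (p.2 h u.1)}
  zero_mem' := by
    intro h u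
    simp
  add_mem' := by
    intro p q hp hq h u
    have h1 := hp h u
    have h2 := hq h u
    simp only [Prod.fst_add, Prod.snd_add, Pi.add_apply, LinearMap.add_apply, map_add]
    rw [h1, h2]
    abel
  smul_mem' := by
    intro c p hp h u
    have h1 := hp h u
    simp only [Prod.smul_fst, Prod.smul_snd, Pi.smul_apply, LinearMap.smul_apply, map_smul]
    rw [h1]
    simp [smul_add]

theorem Submodule.exists_mkQ_comp_comp_subtype_eq {K U V : Type*} [DivisionRing K]
    [AddCommGroup U] [Module K U] [AddCommGroup V] [Module K V]
    (W : Submodule K U) (N : Submodule K V) (f : W →ₗ[K] V ⧸ N) :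
    ∃ y : U →ₗ[K] V, N.mkQ ∘ₗ y ∘ₗ W.subtype = f := by
  obtain ⟨g, rfl⟩ := LinearMap.exists_extend f
  obtain ⟨y, rfl⟩ := N.mkQ_surjective.surjective_linearMapComp_left g
  exact ⟨y, rfl⟩

section QuiverGamma

variable {K : Type*} [Field K] {I H : Type*} {s t : H → I}
  {U V : I → Type*} [∀ i, AddCommGroup (U i)] [∀ i, Module K (U i)]
  [∀ i, AddCommGroup (V i)] [∀ i, Module K (V i)]
  {W' : ∀ i, Submodule K (U i)} {W'' : ∀ i, Submodule K (V i)}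
  {x' : ∀ h, U (s h) →ₗ[K] U (t h)} {hx' : ∀ h, ∀ u ∈ W' (s h), x' h u ∈ W' (t h)}
  {x'' : ∀ h, V (s h) →ₗ[K] V (t h)} {hx'' : ∀ h, W'' (s h) ≤ (W'' (t h)).comap (x'' h)}

theorem exists_prod_mem_quiverGamma (z : ∀ i, W' i →ₗ[K] V i ⧸ W'' i) :
    ∃ y : ∀ h, U (s h) →ₗ[K] V (t h), (z, y) ∈ quiverGamma K s t U V W' W'' x' hx' x'' hx'' := by
  choose y hy using fun h ↦ (W' (s h)).exists_mkQ_comp_comp_subtype_eq (W'' (t h))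
    (z (t h) ∘ₗ (x' h).restrict (hx' h) -
      Submodule.mapQ (W'' (s h)) (W'' (t h)) (x'' h) (hx'' h) ∘ₗ z (s h))
  refine ⟨y, fun h u ↦ ?_⟩
  have hyu := LinearMap.congr_fun (hy h) u
  simp only [LinearMap.comp_apply, Submodule.coe_subtype, LinearMap.sub_apply] at hyu
  rw [hyu, add_sub_cancel]
  rfl

theorem zero_prod_mem_quiverGamma_iff (y : ∀ h, U (s h) →ₗ[K] V (t h)) :
    (0, y) ∈ quiverGamma K s t U V W' W'' x' hx' x'' hx'' ↔
      ∀ h, ∀ u ∈ W' (s h), y h u ∈ W'' (t h) := by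
  refine forall_congr' fun h ↦ ⟨fun hy u hu ↦ ?_, fun hy u ↦ ?_⟩
  · simpa using (hy ⟨u, hu⟩).symm
  · simpa using ((Submodule.Quotient.mk_eq_zero _).2 (hy u u.2)).symm

end QuiverGamma

/-- The short exact sequence `0 → Γ'₁ → Γ → Γ'₂ → 0` in the proof of Lemma 3.2: the
linear projection `Γ → Π_{i∈I} Hom_K(W'(i), V(i)⧸W''(i))`, `(z,y) ↦ z`, is surjective,
and its kernel consists exactly of the pairs `(0, y)` with `y_h(W'(s h)) ⊆ W''(t h)`
for every arrow `h`. -/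
theorem quiverGamma_proj_surjective_and_kernel (K : Type*) [Field K] {I H : Type*}
    (s t : H → I) (U V : I → Type*) [∀ i, AddCommGroup (U i)] [∀ i, Module K (U i)]
    [∀ i, AddCommGroup (V i)] [∀ i, Module K (V i)]
    (W' : ∀ i, Submodule K (U i)) (W'' : ∀ i, Submodule K (V i))
    (x' : ∀ h, U (s h) →ₗ[K] U (t h)) (hx' : ∀ h, ∀ u ∈ W' (s h), x' h u ∈ W' (t h))
    (x'' : ∀ h, V (s h) →ₗ[K] V (t h)) (hx'' : ∀ h, W'' (s h) ≤ (W'' (t h)).comap (x'' h)) :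
    Function.Surjective
      ((LinearMap.fst K (∀ i, W' i →ₗ[K] V i ⧸ W'' i) (∀ h, U (s h) →ₗ[K] V (t h))).domRestrict
        (quiverGamma K s t U V W' W'' x' hx' x'' hx'')) ∧
    ∀ p : quiverGamma K s t U V W' W'' x' hx' x'' hx'',
      p ∈ LinearMap.ker
          ((LinearMap.fst K (∀ i, W' i →ₗ[K] V i ⧸ W'' i)
              (∀ h, U (s h) →ₗ[K] V (t h))).domRestrict
            (quiverGamma K s t U V W' W'' x' hx' x'' hx'')) ↔
        ((p : (∀ i, W' i →ₗ[K] V i ⧸ W'' i) × (∀ h, U (s h) →ₗ[K] V (t h))).1 = 0 ∧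
          ∀ h, ∀ u ∈ W' (s h),
            ((p : (∀ i, W' i →ₗ[K] V i ⧸ W'' i) ×
              (∀ h, U (s h) →ₗ[K] V (t h))).2 h) u ∈ W'' (t h)) := by
  refine ⟨fun z ↦ ?_, fun ⟨⟨z, y⟩, hp⟩ ↦ ?_⟩
  · obtain ⟨y, hy⟩ := exists_prod_mem_quiverGamma z
    exact ⟨⟨(z, y), hy⟩, rfl⟩
  · simp only [LinearMap.mem_ker, LinearMap.domRestrict_apply, LinearMap.fst_apply]
    refine ⟨fun hz ↦ ⟨hz, ?_⟩, And.left⟩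
    subst hz
    exact (zero_prod_mem_quiverGamma_iff y).1 hp
end

section
/- Let Q=(I,H,s,t) be a finite quiver, K a field, and for each i ∈ I let U(i), V(i) be finite-dimensional K-vector spaces with subspaces W'(i) ⊆ U(i) and W''(i) ⊆ V(i). For each h ∈ H let x'_h : U(s h) → U(t h) be linear with x'_h(W'(s h)) ⊆ W'(t h), and x''_h : V(s h) → V(t h) be linear with x''_h(W''(s h)) ⊆ W''(t h); write x̄''_h for the induced map V(s h)⧸W''(s h) → V(t h)⧸W''(t h) and π_i : V(i) → V(i)⧸W''(i) for the quotient maps. Let Γ be the subspace of (Π_{i∈I} Hom_K(W'(i), V(i)⧸W''(i))) × (Π_{h∈H} Hom_K(U(s h), V(t h))) consisting of pairs (z, y) such that for every h ∈ H and every u ∈ W'(s h): z(t h)(x'_h(u)) = x̄''_h(z(s h)(u)) + π_{t h}(y_h(u)). Then dim Γ = Σ_{h∈H} [ dim W'(s h)·dim W''(t h) + (dim U(s h) − dim W'(s h))·dim V(t h) ] + Σ_{i∈I} dim W'(i)·(dim V(i) − dim W''(i)). -/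
/-! `Γ` is the kernel of the defect map
`(z, y) ↦ (z(t h) ∘ x'_h − x̄''_h ∘ z(s h) − π_{t h} ∘ y_h|_{W'(s h)})_h` into
`Π_h Hom(W'(s h), V(t h)⧸W''(t h))`. This map is surjective already on the `y`-component, since
over a field every map `W'(s h) → V(t h)⧸W''(t h)` lifts through `π_{t h}` and extends from
`W'(s h)` to `U(s h)`; rank–nullity then gives the dimension. -/

open Module

theorem Submodule.mkQ_comp_comp_subtype_surjective {K M N : Type*} [DivisionRing K]
    [AddCommGroup M] [Module K M] [AddCommGroup N] [Module K N]
    (W : Submodule K M) (W₀ : Submodule K N) :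
    Function.Surjective fun f : M →ₗ[K] N => W₀.mkQ ∘ₗ f ∘ₗ W.subtype := by
  intro w
  obtain ⟨g, rfl⟩ := W₀.mkQ_surjective.surjective_linearMapComp_left w
  obtain ⟨f, rfl⟩ := LinearMap.exists_extend g
  exact ⟨f, rfl⟩

section QuiverDefect

variable (K : Type*) [Field K] {I H : Type*} (s t : H → I)
    (U V : I → Type*) [∀ i, AddCommGroup (U i)] [∀ i, Module K (U i)]
    [∀ i, AddCommGroup (V i)] [∀ i, Module K (V i)]
    (W' : ∀ i, Submodule K (U i)) (W'' : ∀ i, Submodule K (V i))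
    (x' : ∀ h, U (s h) →ₗ[K] U (t h)) (hx' : ∀ h, ∀ u ∈ W' (s h), x' h u ∈ W' (t h))
    (x'' : ∀ h, V (s h) →ₗ[K] V (t h)) (hx'' : ∀ h, W'' (s h) ≤ (W'' (t h)).comap (x'' h))

def quiverDefect :
    ((∀ i, W' i →ₗ[K] V i ⧸ W'' i) × (∀ h, U (s h) →ₗ[K] V (t h))) →ₗ[K]
      (∀ h, W' (s h) →ₗ[K] V (t h) ⧸ W'' (t h)) where
  toFun p h := p.1 (t h) ∘ₗ (x' h).restrict (hx' h)
      - (W'' (s h)).mapQ (W'' (t h)) (x'' h) (hx'' h) ∘ₗ p.1 (s h)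
      - (W'' (t h)).mkQ ∘ₗ p.2 h ∘ₗ (W' (s h)).subtype
  map_add' p q := by
    ext h u
    simp only [Prod.fst_add, Prod.snd_add, Pi.add_apply, LinearMap.add_apply,
      LinearMap.sub_apply, LinearMap.comp_apply, map_add]
    abel
  map_smul' c p := by
    ext h u
    simp only [Prod.smul_fst, Prod.smul_snd, Pi.smul_apply, LinearMap.smul_apply,
      LinearMap.sub_apply, LinearMap.comp_apply, map_smul, RingHom.id_apply, smul_sub]

theorem quiverGamma_eq_ker_quiverDefect :
    quiverGamma K s t U V W' W'' x' hx' x'' hx'' =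
      LinearMap.ker (quiverDefect K s t U V W' W'' x' hx' x'' hx'') := by
  ext p
  simp [quiverGamma, quiverDefect, funext_iff, LinearMap.ext_iff, sub_sub, sub_eq_zero,
    LinearMap.restrict_apply]

theorem quiverDefect_surjective :
    Function.Surjective (quiverDefect K s t U V W' W'' x' hx' x'' hx'') := by
  intro w
  choose y hy using fun h =>
    Submodule.mkQ_comp_comp_subtype_surjective (W' (s h)) (W'' (t h)) (-w h)
  refine ⟨(0, y), funext fun h => ?_⟩
  simp [quiverDefect, hy]

end QuiverDefect

/-- The fibre-dimension computation in Lemma 3.2 of the paper: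
`dim Γ = Σ_{h∈H} [dim W'(s h)·dim W''(t h) + (dim U(s h) − dim W'(s h))·dim V(t h)]
  + Σ_{i∈I} dim W'(i)·(dim V(i) − dim W''(i))`. -/
theorem quiverGamma_finrank (K : Type*) [Field K] {I H : Type*} [Fintype I] [Fintype H]
    (s t : H → I) (U V : I → Type*) [∀ i, AddCommGroup (U i)] [∀ i, Module K (U i)]
    [∀ i, AddCommGroup (V i)] [∀ i, Module K (V i)]
    [∀ i, FiniteDimensional K (U i)] [∀ i, FiniteDimensional K (V i)]
    (W' : ∀ i, Submodule K (U i)) (W'' : ∀ i, Submodule K (V i))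
    (x' : ∀ h, U (s h) →ₗ[K] U (t h)) (hx' : ∀ h, ∀ u ∈ W' (s h), x' h u ∈ W' (t h))
    (x'' : ∀ h, V (s h) →ₗ[K] V (t h)) (hx'' : ∀ h, W'' (s h) ≤ (W'' (t h)).comap (x'' h)) :
    finrank K (quiverGamma K s t U V W' W'' x' hx' x'' hx'') =
      (∑ h, (finrank K (W' (s h)) * finrank K (W'' (t h)) +
        (finrank K (U (s h)) - finrank K (W' (s h))) * finrank K (V (t h)))) +
      ∑ i, finrank K (W' i) * (finrank K (V i) - finrank K (W'' i)) := by
  have rank_nullity := LinearMap.finrank_range_add_finrank_ker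
    (quiverDefect K s t U V W' W'' x' hx' x'' hx'')
  rw [LinearMap.range_eq_top.2 (quiverDefect_surjective K s t U V W' W'' x' hx' x'' hx''),
    finrank_top, ← quiverGamma_eq_ker_quiverDefect] at rank_nullity
  simp only [finrank_prod, finrank_pi_fintype, finrank_linearMap,
    Submodule.finrank_quotient] at rank_nullity
  have per_arrow : ∀ h, finrank K (U (s h)) * finrank K (V (t h)) =
      finrank K (W' (s h)) * (finrank K (V (t h)) - finrank K (W'' (t h))) +
        (finrank K (W' (s h)) * finrank K (W'' (t h)) +
          (finrank K (U (s h)) - finrank K (W' (s h))) * finrank K (V (t h))) := fun h => by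
    have := (W' (s h)).finrank_le
    have := (W'' (t h)).finrank_le
    zify [*]
    ring
  rw [Finset.sum_congr rfl fun h _ => per_arrow h, Finset.sum_add_distrib] at rank_nullity
  omega
end
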